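/- The map z ↦ z^d maps the prototype carrot 𝖢(ρ₀, θ₀) onto the prototype carrot 𝖢(ρ₀^d, d·θ₀), provided ρ₀ < 1 is sufficiently close to 1. -/

import Mathlib

open Set

/-- The prototype carrot `𝖢(ρ₀, θ₀)`: the region in the closed unit disk given in
polar coordinates `(θ, ρ)` by `ρ₀ ≤ ρ ≤ e^{−|θ − θ₀|}`, where `|θ − θ₀|` is the
distance in `ℝ/ℤ`. -/
noncomputable def protoCarrot (ρ₀ : ℝ) (θ₀ : AddCircle (1:ℝ)) : Set ℂ :=
  {z | ∃ ρ θ : ℝ, ρ₀ ≤ ρ ∧ ρ ≤ Real.exp (-(dist ((θ : AddCircle (1:ℝ))) θ₀)) ∧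
    z = (ρ : ℂ) * Complex.exp (2 * Real.pi * Complex.I * θ)}

/-!
Write points of the carrot as `ρ · e(x)` with `x ∈ ℝ/ℤ` and `e = AddCircle.toCircle`, so that
`(ρ · e(x))^d = ρ^d · e(d • x)`. Multiplication by `d` on `ℝ/ℤ` is `d`-Lipschitz, so raising
`ρ ≤ e^{-|x - θ₀|}` to the `d`-th power gives the inequality defining `𝖢(ρ₀^d, d θ₀)`.
Conversely, dividing a shortest real lift of `x - d θ₀` by `d` yields `y` with `d • y = x`
and `d |y - θ₀| ≤ |x - d θ₀|`; with the real `d`-th root of the modulus this is a preimage.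
-/

open Real

lemma dist_nsmul_nsmul_le {E : Type*} [SeminormedAddCommGroup E] (n : ℕ) (a b : E) :
    dist (n • a) (n • b) ≤ n * dist a b := by
  rw [dist_eq_norm, dist_eq_norm, ← nsmul_sub]
  exact norm_nsmul_le

namespace AddCircle

variable {p : ℝ}

lemma exists_coe_eq_abs_eq_norm (x : AddCircle p) :
    ∃ u : ℝ, (u : AddCircle p) = x ∧ |u| = ‖x‖ := by
  obtain ⟨t, rfl⟩ := QuotientAddGroup.mk_surjective x
  refine ⟨t - round (p⁻¹ * t) * p, ?_, (norm_eq p).symm⟩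
  rw [coe_sub, ← zsmul_eq_mul, coe_zsmul, coe_period, smul_zero, sub_zero]

lemma exists_nsmul_eq_mul_dist_le {n : ℕ} (hn : n ≠ 0) (x a : AddCircle p) :
    ∃ y : AddCircle p, n • y = x ∧ n * dist y a ≤ dist x (n • a) := by
  obtain ⟨u, hu, hu_norm⟩ := exists_coe_eq_abs_eq_norm (x - n • a)
  have hn_pos : (0 : ℝ) < n := by positivity
  refine ⟨a + ((u / n : ℝ) : AddCircle p), ?_, ?_⟩
  · rw [nsmul_add, ← coe_nsmul, nsmul_eq_mul, mul_div_cancel₀ _ hn_pos.ne', hu, add_sub_cancel]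
  · calc n * dist (a + ((u / n : ℝ) : AddCircle p)) a
        = n * ‖((u / n : ℝ) : AddCircle p)‖ := by rw [dist_eq_norm, add_sub_cancel_left]
      _ ≤ n * |u / n| := by gcongr; exact QuotientAddGroup.norm_mk_le_norm
      _ = dist x (n • a) := by
        rw [abs_div, Nat.abs_cast, mul_div_cancel₀ _ hn_pos.ne', hu_norm, dist_eq_norm]

end AddCircle

lemma coe_toCircle_coe (θ : ℝ) :
    (AddCircle.toCircle (θ : AddCircle (1:ℝ)) : ℂ) = Complex.exp (2 * π * Complex.I * θ) := by
  rw [AddCircle.toCircle_apply_mk, Circle.coe_exp]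
  push_cast
  ring_nf

lemma mem_protoCarrot_iff {ρ₀ : ℝ} {θ₀ : AddCircle (1:ℝ)} {z : ℂ} :
    z ∈ protoCarrot ρ₀ θ₀ ↔ ∃ (ρ : ℝ) (x : AddCircle (1:ℝ)),
      ρ₀ ≤ ρ ∧ ρ ≤ exp (-dist x θ₀) ∧ z = ρ * AddCircle.toCircle x := by
  simp only [protoCarrot, mem_ofPred_eq, ← coe_toCircle_coe]
  constructor
  · rintro ⟨ρ, θ, h⟩
    exact ⟨ρ, θ, h⟩
  · rintro ⟨ρ, x, h⟩
    obtain ⟨θ, rfl⟩ := QuotientAddGroup.mk_surjective x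
    exact ⟨ρ, θ, h⟩

lemma pow_le_exp_neg_mul {ρ t : ℝ} (hρ : 0 ≤ ρ) (h : ρ ≤ exp (-t)) (n : ℕ) :
    ρ ^ n ≤ exp (-(n * t)) := by
  rw [neg_mul_eq_mul_neg, exp_nat_mul]
  exact pow_le_pow_left₀ hρ h n

lemma le_exp_neg_of_pow_le_exp_neg_mul {ρ t : ℝ} {n : ℕ} (hρ : 0 ≤ ρ) (hn : n ≠ 0)
    (h : ρ ^ n ≤ exp (-(n * t))) : ρ ≤ exp (-t) := by
  rw [neg_mul_eq_mul_neg, exp_nat_mul] at h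
  exact (pow_le_pow_iff_left₀ hρ (exp_pos _).le hn).1 h

section Carrot

variable {ρ₀ : ℝ} {θ₀ : AddCircle (1:ℝ)}

lemma mapsTo_pow_protoCarrot (hρ₀ : 0 ≤ ρ₀) (d : ℕ) :
    MapsTo (· ^ d) (protoCarrot ρ₀ θ₀) (protoCarrot (ρ₀ ^ d) (d • θ₀)) := by
  intro z hz
  obtain ⟨ρ, x, hρ₀ρ, hρ, rfl⟩ := mem_protoCarrot_iff.1 hz
  have hρ_nonneg : 0 ≤ ρ := hρ₀.trans hρ₀ρ
  refine mem_protoCarrot_iff.2 ⟨ρ ^ d, d • x, pow_le_pow_left₀ hρ₀ hρ₀ρ d, ?_, ?_⟩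
  · refine (pow_le_exp_neg_mul hρ_nonneg hρ d).trans (exp_le_exp.2 ?_)
    exact neg_le_neg (dist_nsmul_nsmul_le d x θ₀)
  · simp [mul_pow, AddCircle.toCircle_nsmul]

lemma protoCarrot_subset_image_pow (hρ₀ : 0 ≤ ρ₀) {d : ℕ} (hd : d ≠ 0) :
    protoCarrot (ρ₀ ^ d) (d • θ₀) ⊆ (· ^ d) '' protoCarrot ρ₀ θ₀ := by
  intro w hw
  obtain ⟨σ, x, hσ₀, hσ, rfl⟩ := mem_protoCarrot_iff.1 hw
  obtain ⟨y, rfl, hy⟩ := AddCircle.exists_nsmul_eq_mul_dist_le hd x θ₀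
  have hσ_nonneg : 0 ≤ σ := (pow_nonneg hρ₀ d).trans hσ₀
  set ρ := σ ^ (d⁻¹ : ℝ)
  have hρ_pow : ρ ^ d = σ := rpow_inv_natCast_pow hσ_nonneg hd
  have hρ_nonneg : 0 ≤ ρ := rpow_nonneg hσ_nonneg _
  refine ⟨ρ * AddCircle.toCircle y, mem_protoCarrot_iff.2 ⟨ρ, y, ?_, ?_, rfl⟩, ?_⟩
  · rwa [← pow_le_pow_iff_left₀ hρ₀ hρ_nonneg hd, hρ_pow]
  · refine le_exp_neg_of_pow_le_exp_neg_mul hρ_nonneg hd ?_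
    rw [hρ_pow]
    exact hσ.trans (exp_le_exp.2 (neg_le_neg hy))
  · simp [mul_pow, AddCircle.toCircle_nsmul, ← hρ_pow]

end Carrot

/-- the map `z ↦ z^d` takes `𝖢(ρ₀, θ₀)` onto `𝖢(ρ₀^d, d θ₀)` provided
`ρ₀ < 1` is sufficiently close to `1`. -/
theorem pow_image_protoCarrot
    (d : ℕ) (hd : 2 ≤ d) (θ₀ : AddCircle (1:ℝ)) :
    ∃ ρ₁ ∈ Ioo (0:ℝ) 1, ∀ ρ₀ : ℝ, ρ₁ ≤ ρ₀ → ρ₀ < 1 →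
      (fun z : ℂ => z ^ d) '' protoCarrot ρ₀ θ₀ = protoCarrot (ρ₀ ^ d) (d • θ₀) := by
  refine ⟨1 / 2, ⟨by norm_num, by norm_num⟩, fun ρ₀ hρ₁ _ => ?_⟩
  have hρ₀ : 0 ≤ ρ₀ := by linarith
  exact (mapsTo_pow_protoCarrot hρ₀ d).image_subset.antisymm
    (protoCarrot_subset_image_pow hρ₀ (by omega))
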